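/- arXiv:1001.0038 — 5 statements merged into one kernel-verified Lean document; each statement's English description precedes it below -/
import Mathlib

section
/- Let H be a Hilbert space, I a countable index set, and (f_Q)_{Q∈I} a family of pairwise orthogonal vectors in H. Let f ∈ H and δ > 0 satisfy Σ_{Q∈I} ‖f_Q‖² ≤ ‖f‖². Let (Ω, ℙ) be a probability space and (B_Q)_{Q∈I} measurable subsets of Ω with ℙ(B_Q) ≤ δ² for every Q ∈ I. For ω ∈ Ω define f_bad(ω) := Σ_{Q∈I} 1_{B_Q}(ω)·f_Q (the series converges unconditionally in H). Then ∫_Ω ‖f_bad(ω)‖ dℙ(ω) ≤ δ·‖f‖. -/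
open MeasureTheory
open scoped InnerProductSpace ENNReal

/-!
For fixed `ω` the vectors `1_{B_Q}(ω) • f_Q` are still pairwise orthogonal, so by Pythagoras
`‖f_bad(ω)‖² = ∑_Q 1_{B_Q}(ω) ‖f_Q‖²`. Integrating termwise gives
`𝔼‖f_bad‖² = ∑_Q ℙ(B_Q) ‖f_Q‖² ≤ δ² ‖f‖²`, and on a probability space
`𝔼‖f_bad‖ ≤ (𝔼‖f_bad‖²)^{1/2}` by Cauchy–Schwarz. Working with `‖·‖ₑ` in `ℝ≥0∞` makes the
square function a countable sum of indicators, which also gives the measurability of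
`ω ↦ ‖f_bad(ω)‖` although `H` carries no measurable structure.
-/

section Orthogonal

variable {𝕜 E ι : Type*} [RCLike 𝕜] [NormedAddCommGroup E] [InnerProductSpace 𝕜 E] {v : ι → E}

theorem orthogonalFamily_span_singleton (hv : Pairwise fun i j => ⟪v i, v j⟫_𝕜 = 0) :
    OrthogonalFamily 𝕜 (fun i => (𝕜 ∙ v i : Submodule 𝕜 E)) fun i => (𝕜 ∙ v i).subtypeₗᵢ := by
  rintro i j hij ⟨x, hx⟩ ⟨y, hy⟩
  obtain ⟨a, rfl⟩ := Submodule.mem_span_singleton.1 hx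
  obtain ⟨b, rfl⟩ := Submodule.mem_span_singleton.1 hy
  simp [inner_smul_left, inner_smul_right, hv hij]

theorem summable_of_pairwise_inner_eq_zero [CompleteSpace E]
    (hv : Pairwise fun i j => ⟪v i, v j⟫_𝕜 = 0) (hsum : Summable fun i => ‖v i‖ ^ 2) :
    Summable v :=
  (orthogonalFamily_span_singleton hv).summable_iff_norm_sq_summable
    (fun i => ⟨v i, Submodule.mem_span_singleton_self _⟩) |>.2 hsum

theorem hasSum_norm_sq_of_pairwise_inner_eq_zero (hv : Pairwise fun i j => ⟪v i, v j⟫_𝕜 = 0)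
    (hsum : Summable v) : HasSum (fun i => ‖v i‖ ^ 2) (‖∑' i, v i‖ ^ 2) := by
  have hpartial (s : Finset ι) : ‖∑ i ∈ s, v i‖ ^ 2 = ∑ i ∈ s, ‖v i‖ ^ 2 :=
    (orthogonalFamily_span_singleton hv).norm_sum
      (fun i => ⟨v i, Submodule.mem_span_singleton_self _⟩) s
  exact ((continuous_norm.pow 2).tendsto _).comp hsum.hasSum |>.congr hpartial

theorem enorm_tsum_sq_of_pairwise_inner_eq_zero (hv : Pairwise fun i j => ⟪v i, v j⟫_𝕜 = 0)
    (hsum : Summable v) : ‖∑' i, v i‖ₑ ^ 2 = ∑' i, ‖v i‖ₑ ^ 2 := by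
  simp only [← ofReal_norm, ← ENNReal.ofReal_pow (norm_nonneg _)]
  rw [← ENNReal.ofReal_tsum_of_nonneg (fun i => sq_nonneg _)
    (hasSum_norm_sq_of_pairwise_inner_eq_zero hv hsum).summable,
    (hasSum_norm_sq_of_pairwise_inner_eq_zero hv hsum).tsum_eq]

theorem Pairwise.inner_smul_eq_zero (hv : Pairwise fun i j => ⟪v i, v j⟫_𝕜 = 0) (c : ι → 𝕜) :
    Pairwise fun i j => ⟪c i • v i, c j • v j⟫_𝕜 = 0 := fun i j hij => by
  simp [inner_smul_left, inner_smul_right, hv hij]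

end Orthogonal

section Probability

variable {Ω : Type*} [MeasurableSpace Ω] {μ : Measure Ω} [IsProbabilityMeasure μ]

theorem lintegral_le_of_lintegral_sq_le {g : Ω → ℝ≥0∞} (hg : AEMeasurable g μ) {C : ℝ≥0∞}
    (h : ∫⁻ ω, g ω ^ 2 ∂μ ≤ C ^ 2) : ∫⁻ ω, g ω ∂μ ≤ C := by
  have hholder := ENNReal.lintegral_mul_le_Lp_mul_Lq μ Real.HolderConjugate.two_two hg
    (aemeasurable_const (b := 1))
  simp only [Pi.mul_apply, mul_one, ENNReal.one_rpow, lintegral_const, measure_univ] at hholder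
  calc ∫⁻ ω, g ω ∂μ ≤ (∫⁻ ω, g ω ^ (2 : ℝ) ∂μ) ^ (1 / 2 : ℝ) := hholder
    _ ≤ (C ^ (2 : ℝ)) ^ (1 / 2 : ℝ) := by
      gcongr
      simpa only [ENNReal.rpow_two] using h
    _ = C := by rw [← ENNReal.rpow_mul]; norm_num

theorem integral_norm_le_of_lintegral_enorm_sq_le {E : Type*} [NormedAddCommGroup E] {g : Ω → E}
    (hg : AEMeasurable (fun ω => ‖g ω‖ₑ) μ) {C : ℝ} (hC : 0 ≤ C)
    (h : ∫⁻ ω, ‖g ω‖ₑ ^ 2 ∂μ ≤ ENNReal.ofReal C ^ 2) : ∫ ω, ‖g ω‖ ∂μ ≤ C :=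
  calc ∫ ω, ‖g ω‖ ∂μ ≤ ‖∫ ω, ‖g ω‖ ∂μ‖ₑ.toReal := by
        rw [toReal_enorm]; exact Real.le_norm_self _
    _ ≤ C := by
      refine ENNReal.toReal_le_of_le_ofReal hC ((enorm_integral_le_lintegral_enorm _).trans ?_)
      simpa only [enorm_norm] using lintegral_le_of_lintegral_sq_le hg h

end Probability

section BadPart

variable {H I Ω : Type*} [NormedAddCommGroup H] [InnerProductSpace ℝ H] [CompleteSpace H]
  {fQ : I → H} {B : I → Set Ω}

theorem summable_indicator_one_smul (horth : Pairwise fun Q Q' => ⟪fQ Q, fQ Q'⟫_ℝ = 0)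
    (hsummable : Summable fun Q => ‖fQ Q‖ ^ 2) (ω : Ω) :
    Summable fun Q => (B Q).indicator (fun _ => (1 : ℝ)) ω • fQ Q := by
  refine summable_of_pairwise_inner_eq_zero (horth.inner_smul_eq_zero _)
    (hsummable.of_nonneg_of_le (fun Q => sq_nonneg _) fun Q => ?_)
  by_cases h : ω ∈ B Q <;> simp [h]

theorem enorm_tsum_indicator_one_smul_sq (horth : Pairwise fun Q Q' => ⟪fQ Q, fQ Q'⟫_ℝ = 0)
    (hsummable : Summable fun Q => ‖fQ Q‖ ^ 2) (ω : Ω) :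
    ‖∑' Q, (B Q).indicator (fun _ => (1 : ℝ)) ω • fQ Q‖ₑ ^ 2 =
      ∑' Q, (B Q).indicator (fun _ => ‖fQ Q‖ₑ ^ 2) ω := by
  rw [enorm_tsum_sq_of_pairwise_inner_eq_zero (horth.inner_smul_eq_zero _)
    (summable_indicator_one_smul horth hsummable ω)]
  refine tsum_congr fun Q => ?_
  by_cases h : ω ∈ B Q <;> simp [h]

variable [Countable I] [MeasurableSpace Ω]

theorem measurable_enorm_tsum_indicator_one_smul
    (horth : Pairwise fun Q Q' => ⟪fQ Q, fQ Q'⟫_ℝ = 0) (hsummable : Summable fun Q => ‖fQ Q‖ ^ 2)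
    (hB : ∀ Q, MeasurableSet (B Q)) :
    Measurable fun ω => ‖∑' Q, (B Q).indicator (fun _ => (1 : ℝ)) ω • fQ Q‖ₑ := by
  have hS : Measurable fun ω => ∑' Q, (B Q).indicator (fun _ => ‖fQ Q‖ₑ ^ 2) ω :=
    .tsum fun Q => measurable_const.indicator (hB Q)
  convert hS.pow_const (1 / 2 : ℝ) using 2 with ω
  rw [← enorm_tsum_indicator_one_smul_sq horth hsummable, ← ENNReal.rpow_two, ← ENNReal.rpow_mul]
  norm_num

theorem lintegral_enorm_tsum_indicator_one_smul_sq
    (horth : Pairwise fun Q Q' => ⟪fQ Q, fQ Q'⟫_ℝ = 0) (hsummable : Summable fun Q => ‖fQ Q‖ ^ 2)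
    (hB : ∀ Q, MeasurableSet (B Q)) (μ : Measure Ω) :
    ∫⁻ ω, ‖∑' Q, (B Q).indicator (fun _ => (1 : ℝ)) ω • fQ Q‖ₑ ^ 2 ∂μ =
      ∑' Q, μ (B Q) * ‖fQ Q‖ₑ ^ 2 := by
  simp only [enorm_tsum_indicator_one_smul_sq horth hsummable]
  rw [lintegral_tsum fun Q => (measurable_const.indicator (hB Q)).aemeasurable]
  simp only [lintegral_indicator_const (hB _), mul_comm]

end BadPart

/-- If `(f_Q)` is an orthogonal family with `Σ ‖f_Q‖² ≤ ‖f‖²` and each "bad event" `B_Q` has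
probability at most `δ²`, then the random bad part `f_bad(ω) = Σ_{Q} 1_{B_Q}(ω)·f_Q`
satisfies `𝔼‖f_bad‖ ≤ δ‖f‖`. -/
theorem expectation_norm_bad_part_le
    {H : Type*} [NormedAddCommGroup H] [InnerProductSpace ℝ H] [CompleteSpace H]
    {I : Type*} [Countable I]
    (fQ : I → H) (horth : ∀ Q Q' : I, Q ≠ Q' → (inner ℝ (fQ Q) (fQ Q') : ℝ) = 0)
    (f : H) (δ : ℝ) (hδ : 0 < δ)
    (hsummable : Summable fun Q => ‖fQ Q‖ ^ 2)
    (hbessel : ∑' Q, ‖fQ Q‖ ^ 2 ≤ ‖f‖ ^ 2)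
    {Ω : Type*} [MeasurableSpace Ω] (ℙ : Measure Ω) [IsProbabilityMeasure ℙ]
    (B : I → Set Ω) (hBmeas : ∀ Q, MeasurableSet (B Q))
    (hBprob : ∀ Q, ℙ (B Q) ≤ ENNReal.ofReal (δ ^ 2)) :
    (∀ ω : Ω, Summable fun Q => Set.indicator (B Q) (fun _ => (1 : ℝ)) ω • fQ Q) ∧
      ∫ ω, ‖∑' Q, Set.indicator (B Q) (fun _ => (1 : ℝ)) ω • fQ Q‖ ∂ℙ ≤ δ * ‖f‖ := by
  refine ⟨summable_indicator_one_smul horth hsummable, ?_⟩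
  have hbessel_enorm : ∑' Q, ‖fQ Q‖ₑ ^ 2 ≤ ‖f‖ₑ ^ 2 := by
    simp only [← ofReal_norm, ← ENNReal.ofReal_pow (norm_nonneg _)]
    rw [← ENNReal.ofReal_tsum_of_nonneg (fun Q => sq_nonneg _) hsummable]
    exact ENNReal.ofReal_le_ofReal hbessel
  refine integral_norm_le_of_lintegral_enorm_sq_le
    (measurable_enorm_tsum_indicator_one_smul horth hsummable hBmeas).aemeasurable
    (by positivity) ?_
  calc _ = ∑' Q, ℙ (B Q) * ‖fQ Q‖ₑ ^ 2 :=
        lintegral_enorm_tsum_indicator_one_smul_sq horth hsummable hBmeas ℙ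
    _ ≤ ∑' Q, ENNReal.ofReal (δ ^ 2) * ‖fQ Q‖ₑ ^ 2 := by gcongr with Q; exact hBprob Q
    _ ≤ ENNReal.ofReal (δ ^ 2) * ‖f‖ₑ ^ 2 := by rw [ENNReal.tsum_mul_left]; gcongr
    _ = ENNReal.ofReal (δ * ‖f‖) ^ 2 := by
      rw [ENNReal.ofReal_mul hδ.le, mul_pow, ENNReal.ofReal_pow hδ.le, ofReal_norm]
end

section
/- Let (X,ρ) be a metric space, μ a Borel measure on X, and let k be a Calderón–Zygmund kernel of order m > 0 on (X,ρ) with constants C_CZ, τ, δ_CZ. Set α := τ/(2(τ+m)). Let Q, R be Borel subsets of X with μ(Q), μ(R) < ∞ and let 0 < s(Q) ≤ s(R) satisfy diam(Q) ≤ s(Q) and diam(R) ≤ s(R). Let φ ∈ L²(μ) vanish outside Q with ∫_X φ dμ = 0, and let ψ ∈ L²(μ) vanish outside R. Assume dist(Q, supp ψ) ≥ s(Q)^α · s(R)^{1−α} and s(Q)^α·s(R)^{1−α} ≥ s(Q)/δ_CZ. Then |∫_X ∫_X k(x,y) φ(x) ψ(y) dμ(x) dμ(y)| ≤ C · (s(Q)^{τ/2}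 s(R)^{τ/2} / D(Q,R)^{m+τ}) · √(μ(Q)μ(R)) · ‖φ‖_{L²(μ)} ‖ψ‖_{L²(μ)}, where D(Q,R) := s(Q) + s(R) + dist(Q,R) and C depends only on C_CZ, τ, m. -/
/-!
Fix `x₀ ∈ Q`. As `φ` has mean zero, `∫ k(x,y) φ(x) dμ(x) = ∫ (k(x,y) - k(x₀,y)) φ(x) dμ(x)`, and
for `y ∈ supp ψ` the separation `ρ(x₀,y) ≥ s(Q)^α s(R)^(1-α) ≥ s(Q)/δ_CZ` brings every `x ∈ Q` into
the range of the smoothness condition, which bounds the integrand by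
`C_CZ s(Q)^τ ρ(x₀,y)^-(m+τ) |φ(x)|`. The choice of `α` gives
`(s(Q)^α s(R)^(1-α))^(m+τ) = s(Q)^(τ/2) s(R)^(m+τ/2)`, which turns this decay into
`3^(m+τ) s(Q)^(τ/2) s(R)^(τ/2) D(Q,R)^-(m+τ)`, separately for `ρ(x₀,y) ≥ s(R)` and `ρ(x₀,y) ≤ s(R)`.
Integrating against `|ψ|` and using Cauchy–Schwarz, `‖φ‖₁ ≤ √μ(Q) ‖φ‖₂` and `‖ψ‖₁ ≤ √μ(R) ‖ψ‖₂`,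
finishes the proof.
-/

open MeasureTheory Metric

noncomputable def setDist {X : Type*} [MetricSpace X] (S T : Set X) : ℝ :=
  sInf (Set.image2 dist S T)

theorem setDist_nonneg {X : Type*} [MetricSpace X] (S T : Set X) : 0 ≤ setDist S T :=
  Real.sInf_nonneg (by rintro _ ⟨x, -, y, -, rfl⟩; exact dist_nonneg)

theorem setDist_le_dist {X : Type*} [MetricSpace X] {S T : Set X} {x y : X} (hx : x ∈ S)
    (hy : y ∈ T) : setDist S T ≤ dist x y :=
  csInf_le ⟨0, by rintro _ ⟨x, -, y, -, rfl⟩; exact dist_nonneg⟩ (Set.mem_image2_of_mem hx hy)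

section Integrals

variable {α : Type*} [MeasurableSpace α] {μ : Measure α}

theorem eLpNorm_one_le_eLpNorm_two_mul_rpow_measure {E : Type*} [NormedAddCommGroup E]
    {f : α → E} {s : Set α} (hf : AEStronglyMeasurable f μ) (hfs : Function.support f ⊆ s) :
    eLpNorm f 1 μ ≤ eLpNorm f 2 μ * μ s ^ (1 / 2 : ℝ) := by
  have h := eLpNorm_le_eLpNorm_mul_rpow_measure_univ (p := 1) (q := 2) (by norm_num)
    (hf.restrict (s := s))
  rw [eLpNorm_restrict_eq_of_support_subset hfs, eLpNorm_restrict_eq_of_support_subset hfs,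
    Measure.restrict_apply_univ] at h
  convert h using 3
  norm_num

theorem MeasureTheory.MemLp.integrable_of_support_subset {E : Type*} [NormedAddCommGroup E]
    {f : α → E} {s : Set α} (hf : MemLp f 2 μ) (hfs : Function.support f ⊆ s) (hs : μ s < ⊤) :
    Integrable f μ := by
  rw [← memLp_one_iff_integrable]
  exact ⟨hf.1, (eLpNorm_one_le_eLpNorm_two_mul_rpow_measure hf.1 hfs).trans_lt
    (ENNReal.mul_lt_top hf.2 (ENNReal.rpow_lt_top_of_nonneg (by norm_num) hs.ne))⟩

theorem integral_norm_le_sqrt_measure_mul_eLpNorm_two {E : Type*} [NormedAddCommGroup E]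
    {f : α → E} {s : Set α} (hf : MemLp f 2 μ) (hfs : Function.support f ⊆ s) (hs : μ s < ⊤) :
    ∫ x, ‖f x‖ ∂μ ≤ √(μ s).toReal * (eLpNorm f 2 μ).toReal := by
  rw [integral_norm_eq_lintegral_enorm hf.1, ← eLpNorm_one_eq_lintegral_enorm, mul_comm,
    Real.sqrt_eq_rpow, ENNReal.toReal_rpow, ← ENNReal.toReal_mul]
  exact ENNReal.toReal_mono
    (ENNReal.mul_ne_top hf.2.ne (ENNReal.rpow_ne_top_of_nonneg (by norm_num) hs.ne))
    (eLpNorm_one_le_eLpNorm_two_mul_rpow_measure hf.1 hfs)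

variable {𝕜 : Type*} [RCLike 𝕜]

theorem norm_integral_mul_le_of_integral_eq_zero {g φ : α → 𝕜} {ε : ℝ} (c : 𝕜)
    (hg : AEStronglyMeasurable g μ) (hφ : Integrable φ μ) (hφ0 : ∫ x, φ x ∂μ = 0)
    (hgc : ∀ x, φ x ≠ 0 → ‖g x - c‖ ≤ ε) :
    ‖∫ x, g x * φ x ∂μ‖ ≤ ε * ∫ x, ‖φ x‖ ∂μ := by
  have hbound : ∀ x, ‖(g x - c) * φ x‖ ≤ ε * ‖φ x‖ := by
    intro x
    by_cases hx : φ x = 0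
    · simp [hx]
    · rw [norm_mul]
      exact mul_le_mul_of_nonneg_right (hgc x hx) (norm_nonneg _)
  have hint : Integrable (fun x => (g x - c) * φ x) μ :=
    (hφ.norm.const_mul ε).mono' ((hg.sub aestronglyMeasurable_const).mul hφ.1)
      (ae_of_all _ hbound)
  have hcancel : ∫ x, g x * φ x ∂μ = ∫ x, (g x - c) * φ x ∂μ := by
    calc ∫ x, g x * φ x ∂μ = ∫ x, ((g x - c) * φ x + c * φ x) ∂μ := by congr with x; ring
      _ = ∫ x, (g x - c) * φ x ∂μ := by
        rw [integral_add hint (hφ.const_mul c), integral_const_mul, hφ0, mul_zero, add_zero]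
  rw [hcancel, ← integral_const_mul]
  exact norm_integral_le_of_norm_le (hφ.norm.const_mul ε) (ae_of_all _ hbound)

theorem norm_integral_integral_mul_le {Y : Type*} [MeasurableSpace Y] {ν : Measure Y}
    {F : α → Y → 𝕜} {ψ : Y → 𝕜} {A : ℝ} (hψ : Integrable ψ ν)
    (hF : ∀ y, ψ y ≠ 0 → ‖∫ x, F x y ∂μ‖ ≤ A) :
    ‖∫ y, ∫ x, F x y * ψ y ∂μ ∂ν‖ ≤ A * ∫ y, ‖ψ y‖ ∂ν := by
  rw [← integral_const_mul]
  refine norm_integral_le_of_norm_le (hψ.norm.const_mul A) (ae_of_all _ fun y => ?_)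
  by_cases hy : ψ y = 0
  · simp [hy]
  · rw [integral_mul_const, norm_mul]
    exact mul_le_mul_of_nonneg_right (hF y hy) (norm_nonneg _)

end Integrals

section Scales

noncomputable def interpScale (m τ a b : ℝ) : ℝ :=
  a ^ (τ / (2 * (τ + m))) * b ^ (1 - τ / (2 * (τ + m)))

variable {m τ a b : ℝ}

theorem interpScale_pos (ha : 0 < a) (hb : 0 < b) : 0 < interpScale m τ a b := by
  unfold interpScale; positivity

theorem interpScale_rpow (hmτ : m + τ ≠ 0) (ha : 0 ≤ a) (hb : 0 ≤ b) :
    interpScale m τ a b ^ (m + τ) = a ^ (τ / 2) * b ^ (m + τ / 2) := by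
  have hτm : τ + m ≠ 0 := by rwa [add_comm]
  rw [interpScale, Real.mul_rpow (by positivity) (by positivity), ← Real.rpow_mul ha,
    ← Real.rpow_mul hb]
  congr 2 <;> field_simp <;> ring

theorem rpow_mul_rpow_le_of_interpScale_le {t d : ℝ} (hτ : 0 ≤ τ) (hmτ : 0 < m + τ)
    (ha : 0 < a) (hab : a ≤ b) (ht : 0 ≤ t) (htd : t ≤ d) (hd : interpScale m τ a b ≤ d) :
    a ^ (τ / 2) * (a + b + t) ^ (m + τ) ≤ 3 ^ (m + τ) * (b ^ (τ / 2) * d ^ (m + τ)) := by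
  have hb : 0 < b := ha.trans_le hab
  have hd0 : 0 < d := (interpScale_pos ha hb).trans_le hd
  rcases le_total b d with hbd | hdb
  · calc a ^ (τ / 2) * (a + b + t) ^ (m + τ) ≤ b ^ (τ / 2) * (3 * d) ^ (m + τ) := by
          gcongr; linarith
      _ = 3 ^ (m + τ) * (b ^ (τ / 2) * d ^ (m + τ)) := by
          rw [Real.mul_rpow (by norm_num) hd0.le]; ring
  · calc a ^ (τ / 2) * (a + b + t) ^ (m + τ) ≤ a ^ (τ / 2) * (3 * b) ^ (m + τ) := by
          gcongr; linarith
      _ = 3 ^ (m + τ) * (b ^ (τ / 2) * interpScale m τ a b ^ (m + τ)) := by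
          rw [interpScale_rpow hmτ.ne' ha.le hb.le, Real.mul_rpow (by norm_num) hb.le,
            show m + τ = τ / 2 + (m + τ / 2) by ring, Real.rpow_add hb]
          ring_nf
      _ ≤ 3 ^ (m + τ) * (b ^ (τ / 2) * d ^ (m + τ)) := by
          gcongr
          exact (interpScale_pos ha hb).le

theorem rpow_div_rpow_le_of_interpScale_le {t d : ℝ} (hτ : 0 ≤ τ) (hmτ : 0 < m + τ)
    (ha : 0 < a) (hab : a ≤ b) (ht : 0 ≤ t) (htd : t ≤ d) (hd : interpScale m τ a b ≤ d) :
    a ^ τ / d ^ (m + τ) ≤ 3 ^ (m + τ) * (a ^ (τ / 2) * b ^ (τ / 2) / (a + b + t) ^ (m + τ)) := by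
  have hb : 0 < b := ha.trans_le hab
  have hd0 : 0 < d := (interpScale_pos ha hb).trans_le hd
  have key := rpow_mul_rpow_le_of_interpScale_le hτ hmτ ha hab ht htd hd
  rw [mul_div_assoc', div_le_div_iff₀ (by positivity) (by positivity),
    show a ^ τ = a ^ (τ / 2) * a ^ (τ / 2) by rw [← Real.rpow_add ha]; ring_nf]
  calc a ^ (τ / 2) * a ^ (τ / 2) * (a + b + t) ^ (m + τ)
      = a ^ (τ / 2) * (a ^ (τ / 2) * (a + b + t) ^ (m + τ)) := by ring
    _ ≤ a ^ (τ / 2) * (3 ^ (m + τ) * (b ^ (τ / 2) * d ^ (m + τ))) := by gcongr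
    _ = 3 ^ (m + τ) * (a ^ (τ / 2) * b ^ (τ / 2)) * d ^ (m + τ) := by ring

end Scales

theorem norm_integral_kernel_mul_le {X 𝕜 : Type*} [PseudoMetricSpace X] [MeasurableSpace X]
    [RCLike 𝕜] {μ : Measure X} {k : X → X → 𝕜} {φ : X → 𝕜} {Q : Set X} {y : X} {C δ m τ s ε : ℝ}
    (hk : Measurable (Function.uncurry k))
    (hk_smooth : ∀ x x' y, y ≠ x → y ≠ x' → dist x x' ≤ δ * dist y x →
      ‖k x y - k x' y‖ ≤ C * dist x x' ^ τ / dist y x ^ (m + τ))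
    (hC : 0 ≤ C) (hτ : 0 ≤ τ) (hs : 0 < s) (hdiam : ediam Q ≤ ENNReal.ofReal s)
    (hφ : Integrable φ μ) (hφQ : Function.support φ ⊆ Q) (hφ0 : ∫ x, φ x ∂μ = 0)
    (hfar : ∀ x ∈ Q, s ≤ δ * dist x y) (hε : ∀ x₀ ∈ Q, C * s ^ τ / dist x₀ y ^ (m + τ) ≤ ε) :
    ‖∫ x, k x y * φ x ∂μ‖ ≤ ε * ∫ x, ‖φ x‖ ∂μ := by
  obtain rfl | ⟨x₀, hx₀⟩ := Q.eq_empty_or_nonempty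
  · simp [Function.support_eq_empty_iff.1 (Set.subset_empty_iff.1 hφQ)]
  have hne : ∀ x ∈ Q, y ≠ x := by
    intro x hx hyx
    have h := hfar x hx
    rw [hyx, dist_self, mul_zero] at h
    linarith
  have hdist : ∀ x ∈ Q, dist x₀ x ≤ s := fun x hx =>
    (edist_le_ofReal hs.le).1 ((Metric.edist_le_ediam_of_mem hx₀ hx).trans hdiam)
  refine norm_integral_mul_le_of_integral_eq_zero (k x₀ y)
    (hk.comp (measurable_id.prodMk measurable_const)).aestronglyMeasurable hφ hφ0 fun x hx => ?_
  have hxQ : x ∈ Q := hφQ hx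
  have hsmall : dist x₀ x ≤ δ * dist y x₀ := by
    rw [dist_comm y]
    exact (hdist x hxQ).trans (hfar x₀ hx₀)
  rw [norm_sub_rev]
  refine (hk_smooth x₀ x y (hne x₀ hx₀) (hne x hxQ) hsmall).trans (le_trans ?_ (hε x₀ hx₀))
  rw [dist_comm y x₀]
  gcongr
  exact hdist x hxQ

/-- Long-range interaction lemma: if `φ` is supported on `Q`, has mean zero, `ψ` is supported
on `R`, `s(Q) ≤ s(R)`, and `dist(Q, supp ψ) ≥ s(Q)^α s(R)^{1−α}` (with `α = τ/(2(τ+m))`),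
then the bilinear form of a Calderón–Zygmund kernel of order `m` satisfies
`|(φ, Tψ)| ≤ C · s(Q)^{τ/2} s(R)^{τ/2} D(Q,R)^{−(m+τ)} √(μ(Q)μ(R)) ‖φ‖₂ ‖ψ‖₂`,
where `C` depends only on `C_CZ, τ, m`. -/
theorem far_interaction_estimate (m τ C_CZ : ℝ)
    (hm : 0 < m) (hτ : 0 < τ) (hCCZ : 0 < C_CZ) :
    ∃ C : ℝ, 0 < C ∧
      ∀ (X : Type) [MetricSpace X] [MeasurableSpace X] [BorelSpace X]
        (μ : Measure X) (δ_CZ : ℝ) (k : X → X → ℂ) (Q R : Set X) (sQ sR : ℝ)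
        (φ ψ : X → ℂ),
        0 < δ_CZ → δ_CZ < 1 →
        Measurable (Function.uncurry k) →
        (∀ x y : X, x ≠ y → ‖k x y‖ ≤ C_CZ / dist x y ^ m) →
        (∀ x y y' : X, x ≠ y → x ≠ y' → dist y y' ≤ δ_CZ * dist x y →
          ‖k x y - k x y'‖ + ‖k y x - k y' x‖ ≤ C_CZ * dist y y' ^ τ / dist x y ^ (m + τ)) →
        MeasurableSet Q → MeasurableSet R → μ Q < ⊤ → μ R < ⊤ →
        0 < sQ → sQ ≤ sR →
        EMetric.diam Q ≤ ENNReal.ofReal sQ → EMetric.diam R ≤ ENNReal.ofReal sR →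
        MemLp φ 2 μ → (∀ x, x ∉ Q → φ x = 0) → (∫ x, φ x ∂μ) = 0 →
        MemLp ψ 2 μ → (∀ x, x ∉ R → ψ x = 0) →
        (∀ x ∈ Q, ∀ y ∈ Function.support ψ,
          sQ ^ (τ / (2 * (τ + m))) * sR ^ (1 - τ / (2 * (τ + m))) ≤ dist x y) →
        sQ / δ_CZ ≤ sQ ^ (τ / (2 * (τ + m))) * sR ^ (1 - τ / (2 * (τ + m))) →
        ‖∫ y, (∫ x, k x y * φ x * ψ y ∂μ) ∂μ‖ ≤
          C * (sQ ^ (τ / 2) * sR ^ (τ / 2) / (sQ + sR + setDist Q R) ^ (m + τ)) *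
            Real.sqrt ((μ Q).toReal * (μ R).toReal) *
            (eLpNorm φ 2 μ).toReal * (eLpNorm ψ 2 μ).toReal := by
  refine ⟨C_CZ * 3 ^ (m + τ), by positivity, ?_⟩
  intro X _ _ _ μ δ_CZ k Q R sQ sR φ ψ hδ _ hk _ hk_smooth _ _ hμQ hμR hsQ hsQR hdiamQ _
    hφ hφQ hφ0 hψ hψR hfar hscale
  have hφQ' : Function.support φ ⊆ Q := Function.support_subset_iff'.2 hφQ
  have hψR' : Function.support ψ ⊆ R := Function.support_subset_iff'.2 hψR
  have hsR : 0 < sR := hsQ.trans_le hsQR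
  have hQR : 0 ≤ setDist Q R := setDist_nonneg Q R
  set K :=
    C_CZ * (3 ^ (m + τ) * (sQ ^ (τ / 2) * sR ^ (τ / 2) / (sQ + sR + setDist Q R) ^ (m + τ)))
  have hK : 0 ≤ K := by positivity
  have hk₁ : ∀ x x' y, y ≠ x → y ≠ x' → dist x x' ≤ δ_CZ * dist y x →
      ‖k x y - k x' y‖ ≤ C_CZ * dist x x' ^ τ / dist y x ^ (m + τ) := fun x x' y hx hx' hxx' =>
    (le_add_of_nonneg_left (norm_nonneg _)).trans (hk_smooth y x x' hx hx' hxx')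
  have hpoint (y : X) (hy : ψ y ≠ 0) : ‖∫ x, k x y * φ x ∂μ‖ ≤ K * ∫ x, ‖φ x‖ ∂μ := by
    refine norm_integral_kernel_mul_le hk hk₁ hCCZ.le hτ.le hsQ hdiamQ
      (hφ.integrable_of_support_subset hφQ' hμQ) hφQ' hφ0
      (fun x hx => (div_le_iff₀' hδ).1 (hscale.trans (hfar x hx y hy))) fun x₀ hx₀ => ?_
    rw [mul_div_assoc]
    exact mul_le_mul_of_nonneg_left (rpow_div_rpow_le_of_interpScale_le hτ.le (by linarith) hsQ
      hsQR hQR (setDist_le_dist hx₀ (hψR' hy)) (hfar x₀ hx₀ y hy)) hCCZ.le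
  calc ‖∫ y, ∫ x, k x y * φ x * ψ y ∂μ ∂μ‖
      ≤ K * (∫ x, ‖φ x‖ ∂μ) * ∫ y, ‖ψ y‖ ∂μ :=
        norm_integral_integral_mul_le (hψ.integrable_of_support_subset hψR' hμR) hpoint
    _ ≤ K * (√(μ Q).toReal * (eLpNorm φ 2 μ).toReal) *
          (√(μ R).toReal * (eLpNorm ψ 2 μ).toReal) := by
        gcongr
        · exact integral_norm_le_sqrt_measure_mul_eLpNorm_two hφ hφQ' hμQ
        · exact integral_norm_le_sqrt_measure_mul_eLpNorm_two hψ hψR' hμR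
    _ = _ := by rw [Real.sqrt_mul ENNReal.toReal_nonneg]; ring
end

section
/- Let (X,ρ) be a metric space, μ a Borel measure on X, m, τ, A > 0, δ₀ > 0, and y ∈ X. Assume μ(B(y,r)) ≤ A·r^m for every r ≥ δ₀. Then ∫_X δ₀^τ / (δ₀ + ρ(x,y))^{m+τ} dμ(x) ≤ C·A, where C depends only on m and τ. -/
/-!
Dominate the kernel by a sum of indicators of the dyadic balls `B_k = B(y, 2^k δ₀)`: every `x`
lies in some `B_k` with `2^k δ₀ ≤ 2 (δ₀ + ρ(x,y))`, and there the kernel at `x` is at most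
`a_k = 2^(m+τ) 2^(-kτ) / (2^k δ₀)^m`. Integrating, the growth bound `μ(B_k) ≤ A (2^k δ₀)^m`
cancels the factor `(2^k δ₀)^(-m)`, leaving `A 2^(m+τ) ∑ 2^(-kτ) = A 2^(m+τ) / (1 - 2^(-τ))`.
-/

open MeasureTheory Metric

lemma exists_two_pow_mul_mem_Ioc {δ t : ℝ} (hδ : 0 < δ) (ht : 0 ≤ t) :
    ∃ k : ℕ, t < 2 ^ k * δ ∧ 2 ^ k * δ ≤ 2 * (δ + t) := by
  obtain ⟨n, hle, hlt⟩ :=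
    exists_nat_pow_near (x := (δ + t) / δ) (y := (2 : ℝ))
      ((le_div_iff₀ hδ).2 (by linarith)) one_lt_two
  rw [le_div_iff₀ hδ] at hle
  rw [div_lt_iff₀ hδ] at hlt
  exact ⟨n + 1, by linarith, by rw [pow_succ]; linarith⟩

lemma div_rpow_le_of_le_two_mul {m τ δ t r : ℝ} (hmτ : 0 ≤ m + τ) (hδ : 0 ≤ δ) (hr : 0 < r)
    (h : r ≤ 2 * (δ + t)) :
    δ ^ τ / (δ + t) ^ (m + τ) ≤ 2 ^ (m + τ) * (δ / r) ^ τ / r ^ m :=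
  calc δ ^ τ / (δ + t) ^ (m + τ)
      ≤ δ ^ τ / (r / 2) ^ (m + τ) := by gcongr; linarith
    _ = 2 ^ (m + τ) * (δ / r) ^ τ / r ^ m := by
      rw [Real.div_rpow hr.le zero_le_two, Real.div_rpow hδ hr.le, Real.rpow_add hr]
      field_simp

lemma div_two_pow_mul_rpow {δ : ℝ} (hδ : 0 < δ) (τ : ℝ) (k : ℕ) :
    (δ / (2 ^ k * δ)) ^ τ = ((2 : ℝ) ^ (-τ)) ^ k := by
  rw [div_mul_cancel_right₀ hδ.ne', Real.inv_rpow (by positivity), ← Real.rpow_natCast,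
    ← Real.rpow_mul zero_le_two, ← Real.rpow_natCast, ← Real.rpow_mul zero_le_two,
    neg_mul, Real.rpow_neg zero_le_two, mul_comm]

theorem lintegral_kernel_le_tsum {X : Type*} [MetricSpace X] [MeasurableSpace X]
    [OpensMeasurableSpace X] {μ : Measure X} {m τ A δ : ℝ} {y : X} (hmτ : 0 ≤ m + τ)
    (hδ : 0 < δ) (hball : ∀ r : ℝ, δ ≤ r → μ (ball y r) ≤ ENNReal.ofReal (A * r ^ m)) :
    ∫⁻ x, ENNReal.ofReal (δ ^ τ / (δ + dist x y) ^ (m + τ)) ∂μ ≤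
      ∑' k : ℕ, ENNReal.ofReal (2 ^ (m + τ) * A * ((2 : ℝ) ^ (-τ)) ^ k) := by
  set r : ℕ → ℝ := fun k => 2 ^ k * δ
  set a : ℕ → ℝ := fun k => 2 ^ (m + τ) * ((2 : ℝ) ^ (-τ)) ^ k / r k ^ m
  have hr : ∀ k, 0 < r k := fun k => by positivity
  have hpointwise : ∀ x, ENNReal.ofReal (δ ^ τ / (δ + dist x y) ^ (m + τ)) ≤
      ∑' k, (ball y (r k)).indicator (fun _ => ENNReal.ofReal (a k)) x := by
    intro x
    obtain ⟨k, hxk, hk⟩ := exists_two_pow_mul_mem_Ioc hδ dist_nonneg (t := dist x y)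
    calc ENNReal.ofReal (δ ^ τ / (δ + dist x y) ^ (m + τ))
        ≤ ENNReal.ofReal (a k) := by
          refine ENNReal.ofReal_le_ofReal ?_
          have := div_rpow_le_of_le_two_mul hmτ hδ.le (hr k) hk
          rwa [div_two_pow_mul_rpow hδ] at this
      _ = (ball y (r k)).indicator (fun _ => ENNReal.ofReal (a k)) x :=
          (Set.indicator_of_mem (s := ball y (r k)) hxk (fun _ => ENNReal.ofReal (a k))).symm
      _ ≤ _ := ENNReal.le_tsum k
  calc ∫⁻ x, ENNReal.ofReal (δ ^ τ / (δ + dist x y) ^ (m + τ)) ∂μ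
      ≤ ∫⁻ x, ∑' k, (ball y (r k)).indicator (fun _ => ENNReal.ofReal (a k)) x ∂μ :=
        lintegral_mono hpointwise
    _ = ∑' k, ENNReal.ofReal (a k) * μ (ball y (r k)) := by
        rw [lintegral_tsum fun k => (measurable_const.indicator measurableSet_ball).aemeasurable]
        simp_rw [lintegral_indicator_const measurableSet_ball]
    _ ≤ ∑' k, ENNReal.ofReal (a k) * ENNReal.ofReal (A * r k ^ m) := by
        gcongr with k
        exact hball _ (le_mul_of_one_le_left hδ.le (one_le_pow₀ one_le_two))
    _ = ∑' k : ℕ, ENNReal.ofReal (2 ^ (m + τ) * A * ((2 : ℝ) ^ (-τ)) ^ k) := by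
        congr 1 with k
        rw [← ENNReal.ofReal_mul (by positivity)]
        congr 1
        have := (Real.rpow_pos_of_pos (hr k) m).ne'
        simp only [a]
        field_simp

/-- Schur-test estimate: if all balls centered at `y` of radius at least `δ₀` satisfy
`μ(B(y,r)) ≤ A·r^m`, then `∫ δ₀^τ/(δ₀ + ρ(x,y))^{m+τ} dμ(x) ≤ C·A` with `C = C(m,τ)`. -/
theorem schur_test_estimate (m τ : ℝ) (hm : 0 < m) (hτ : 0 < τ) :
    ∃ C : ℝ, 0 < C ∧
      ∀ (X : Type) [MetricSpace X] [MeasurableSpace X] [BorelSpace X]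
        (μ : Measure X) (A δ₀ : ℝ) (y : X),
        0 < A → 0 < δ₀ →
        (∀ r : ℝ, δ₀ ≤ r → μ (ball y r) ≤ ENNReal.ofReal (A * r ^ m)) →
        ∫⁻ x, ENNReal.ofReal (δ₀ ^ τ / (δ₀ + dist x y) ^ (m + τ)) ∂μ ≤
          ENNReal.ofReal (C * A) := by
  set q : ℝ := 2 ^ (-τ)
  have hq₀ : 0 ≤ q := by positivity
  have hq₁ : q < 1 := Real.rpow_lt_one_of_one_lt_of_neg one_lt_two (neg_neg_of_pos hτ)
  refine ⟨2 ^ (m + τ) * (1 - q)⁻¹, mul_pos (by positivity) (inv_pos.2 (sub_pos.2 hq₁)), ?_⟩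
  intro X _ _ _ μ A δ₀ y hA hδ₀ hball
  calc ∫⁻ x, ENNReal.ofReal (δ₀ ^ τ / (δ₀ + dist x y) ^ (m + τ)) ∂μ
      ≤ ∑' k : ℕ, ENNReal.ofReal (2 ^ (m + τ) * A * q ^ k) :=
        lintegral_kernel_le_tsum (by linarith) hδ₀ hball
    _ = ENNReal.ofReal (∑' k : ℕ, 2 ^ (m + τ) * A * q ^ k) :=
        (ENNReal.ofReal_tsum_of_nonneg (fun k => by positivity)
          ((summable_geometric_of_lt_one hq₀ hq₁).mul_left _)).symm
    _ = ENNReal.ofReal (2 ^ (m + τ) * (1 - q)⁻¹ * A) := by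
        rw [tsum_mul_left, tsum_geometric_of_lt_one hq₀ hq₁]
        ring_nf
end

section
/- Let X be a set equipped with a Borel measure μ (with respect to some measurable structure), κ ∈ (0,1), and τ > 0. Let ℛ be a countable index set and for each R ∈ ℛ let R₁ ⊆ X be a measurable set with 0 < μ(R₁) < ∞. For each R ∈ ℛ and each integer k ≥ 1, let 𝒬(R,k) be a countable family of pairwise disjoint measurable subsets of R₁, and assume each set Q occurs in at most one family 𝒬(R,k). For Q ∈ 𝒬(R,k) define T_{Q,R} := κ^{kτ/2}·√(μ(Q)/μ(R₁)). Then for all families of nonnegative numbers (a_Q) and (b_R): Σ_{R∈ℛ} Σ_{k≥1} Σ_{Q∈𝒬(R,k)} T_{Q,R} a_Q b_R ≤ (1 − κ^{τ/2})^{−1} · (Σ_Q a_Q²)^{1/2} (Σ_R b_R²)^{1/2}. -/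
/-!
Group the cubes `Q` by the pair `(R, k)`. Inside one group the weights `√(μ Q / μ R₁)` have
square sum at most `1` because the cubes are disjoint subsets of `R₁`, so Cauchy–Schwarz bounds
the contribution of the group by `κ^{kτ/2} b_R (∑_{Q in the group} a_Q²)^{1/2}`. For fixed `k`,
Cauchy–Schwarz over `R` bounds the sum of these by `κ^{kτ/2} ‖a‖ ‖b‖`, and the geometric series
in `k` gives the factor `(1 - κ^{τ/2})⁻¹`. Each term is bounded through `‖a_Q‖ₑ`, `‖b_R‖ₑ`, and
everything is done in `ℝ≥0∞`, where every series converges.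
-/

open MeasureTheory
open scoped ENNReal

namespace ENNReal

variable {ι β : Type*}

theorem tsum_mul_le_Lp_mul_Lq (f g : ι → ℝ≥0∞) {p q : ℝ} (hpq : p.HolderConjugate q) :
    ∑' i, f i * g i ≤ (∑' i, f i ^ p) ^ (1 / p) * (∑' i, g i ^ q) ^ (1 / q) := by
  rw [ENNReal.tsum_eq_iSup_sum]
  refine iSup_le fun s => (inner_le_Lp_mul_Lq s f g hpq).trans ?_
  gcongr
  · exact hpq.one_div_nonneg
  · exact ENNReal.sum_le_tsum s
  · exact hpq.symm.one_div_nonneg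
  · exact ENNReal.sum_le_tsum s

theorem tsum_mul_le_sqrt_mul_sqrt (f g : ι → ℝ≥0∞) :
    ∑' i, f i * g i ≤ (∑' i, f i ^ 2) ^ ((1 : ℝ) / 2) * (∑' i, g i ^ 2) ^ ((1 : ℝ) / 2) := by
  simpa only [rpow_two] using tsum_mul_le_Lp_mul_Lq f g .two_two

theorem tsum_mul_le_of_tsum_sq_le_one {w : ι → ℝ≥0∞} (hw : ∑' i, w i ^ 2 ≤ 1)
    (f : ι → ℝ≥0∞) : ∑' i, w i * f i ≤ (∑' i, f i ^ 2) ^ ((1 : ℝ) / 2) :=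
  calc ∑' i, w i * f i
      ≤ (∑' i, w i ^ 2) ^ ((1 : ℝ) / 2) * (∑' i, f i ^ 2) ^ ((1 : ℝ) / 2) :=
        tsum_mul_le_sqrt_mul_sqrt w f
    _ ≤ (∑' i, f i ^ 2) ^ ((1 : ℝ) / 2) := by
        grw [hw, one_rpow, one_mul]

theorem tsum_prod_pow_mul_mul_sqrt_le (q : ℝ≥0∞) (b : β → ℝ≥0∞) (G : β × ℕ → ℝ≥0∞) :
    ∑' x : β × ℕ, q ^ x.2 * b x.1 * G x ^ ((1 : ℝ) / 2) ≤
      (1 - q)⁻¹ * (∑' x, G x) ^ ((1 : ℝ) / 2) * (∑' j, b j ^ 2) ^ ((1 : ℝ) / 2) := by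
  have hrow (n : ℕ) : ∑' j, b j * G (j, n) ^ ((1 : ℝ) / 2) ≤
      (∑' x, G x) ^ ((1 : ℝ) / 2) * (∑' j, b j ^ 2) ^ ((1 : ℝ) / 2) := by
    have hsq (j : β) : (G (j, n) ^ ((1 : ℝ) / 2)) ^ 2 = G (j, n) := by
      rw [← rpow_natCast, ← rpow_mul]; norm_num
    have hcol : ∑' j, G (j, n) ≤ ∑' x, G x := by
      rw [ENNReal.tsum_prod', ENNReal.tsum_comm]
      exact ENNReal.le_tsum (f := fun n => ∑' j, G (j, n)) n
    calc ∑' j, b j * G (j, n) ^ ((1 : ℝ) / 2)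
        ≤ (∑' j, b j ^ 2) ^ ((1 : ℝ) / 2) * (∑' j, G (j, n)) ^ ((1 : ℝ) / 2) := by
          simpa only [hsq] using tsum_mul_le_sqrt_mul_sqrt b (fun j => G (j, n) ^ ((1 : ℝ) / 2))
      _ ≤ _ := by grw [hcol, mul_comm]
  calc ∑' x : β × ℕ, q ^ x.2 * b x.1 * G x ^ ((1 : ℝ) / 2)
      = ∑' n : ℕ, q ^ n * ∑' j, b j * G (j, n) ^ ((1 : ℝ) / 2) := by
        rw [ENNReal.tsum_prod', ENNReal.tsum_comm]
        simp only [mul_assoc, ENNReal.tsum_mul_left]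
    _ ≤ ∑' n : ℕ, q ^ n * ((∑' x, G x) ^ ((1 : ℝ) / 2) * (∑' j, b j ^ 2) ^ ((1 : ℝ) / 2)) := by
        gcongr with n; exact hrow n
    _ = _ := by rw [ENNReal.tsum_mul_right, tsum_geometric, mul_assoc]

theorem tsum_pow_mul_mul_mul_le_of_fiber_sq_le_one (q : ℝ≥0∞) (r : ι → β) (k : ι → ℕ)
    (w f : ι → ℝ≥0∞) (b : β → ℝ≥0∞)
    (hw : ∀ x, ∑' i : (fun i => (r i, k i)) ⁻¹' {x}, w i ^ 2 ≤ 1) :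
    ∑' i, q ^ k i * w i * f i * b (r i) ≤
      (1 - q)⁻¹ * (∑' i, f i ^ 2) ^ ((1 : ℝ) / 2) * (∑' j, b j ^ 2) ^ ((1 : ℝ) / 2) := by
  set p : ι → β × ℕ := fun i => (r i, k i)
  have hfiber (x : β × ℕ) : ∑' i : p ⁻¹' {x}, q ^ k i * w i * f i * b (r i) ≤
      q ^ x.2 * b x.1 * (∑' i : p ⁻¹' {x}, f i ^ 2) ^ ((1 : ℝ) / 2) :=
    calc ∑' i : p ⁻¹' {x}, q ^ k i * w i * f i * b (r i)
        = q ^ x.2 * b x.1 * ∑' i : p ⁻¹' {x}, w i * f i := by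
          rw [← ENNReal.tsum_mul_left]
          refine tsum_congr fun ⟨i, hi⟩ => ?_
          obtain rfl : p i = x := hi
          ring
      _ ≤ _ := by grw [tsum_mul_le_of_tsum_sq_le_one (hw x)]
  calc ∑' i, q ^ k i * w i * f i * b (r i)
      = ∑' x, ∑' i : p ⁻¹' {x}, q ^ k i * w i * f i * b (r i) :=
        (ENNReal.tsum_fiberwise _ p).symm
    _ ≤ ∑' x, q ^ x.2 * b x.1 * (∑' i : p ⁻¹' {x}, f i ^ 2) ^ ((1 : ℝ) / 2) :=
        ENNReal.tsum_le_tsum hfiber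
    _ ≤ _ := by
        grw [tsum_prod_pow_mul_mul_sqrt_le, ENNReal.tsum_fiberwise (fun i => f i ^ 2) p]

theorem ofReal_sqrt_toReal_div_sq_le (x y : ℝ≥0∞) :
    ENNReal.ofReal (Real.sqrt (x.toReal / y.toReal)) ^ 2 ≤ x / y := by
  rw [← ofReal_pow (Real.sqrt_nonneg _), Real.sq_sqrt (by positivity), ← toReal_div]
  exact ofReal_toReal_le

theorem ofReal_mul_mul_le_mul_enorm {t s : ℝ} (ht : 0 ≤ t) (hs : 0 ≤ s) (x y : ℝ) :
    ENNReal.ofReal (t * s * x * y) ≤ ENNReal.ofReal t * ENNReal.ofReal s * ‖x‖ₑ * ‖y‖ₑ := by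
  rw [← Real.enorm_of_nonneg ht, ← Real.enorm_of_nonneg hs, ← enorm_mul, ← enorm_mul,
    ← enorm_mul]
  exact Real.ofReal_le_enorm _

end ENNReal

section

variable {X ι : Type*} [MeasurableSpace X] [Countable ι] (μ : Measure X) {R : Set X}
  {Q : ι → Set X}

theorem MeasureTheory.tsum_measure_div_le_one (hQ : ∀ i, MeasurableSet (Q i))
    (hdisj : Pairwise (Function.onFun Disjoint Q)) (hsub : ∀ i, Q i ⊆ R) :
    ∑' i, μ (Q i) / μ R ≤ 1 :=
  calc ∑' i, μ (Q i) / μ R = μ (⋃ i, Q i) / μ R := by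
        simp only [div_eq_mul_inv, ENNReal.tsum_mul_right, measure_iUnion hdisj hQ]
    _ ≤ μ R / μ R := by gcongr; exact Set.iUnion_subset hsub
    _ ≤ 1 := ENNReal.div_self_le_one

theorem MeasureTheory.tsum_ofReal_sqrt_measure_ratio_sq_le_one (hQ : ∀ i, MeasurableSet (Q i))
    (hdisj : Pairwise (Function.onFun Disjoint Q)) (hsub : ∀ i, Q i ⊆ R) :
    ∑' i, ENNReal.ofReal (Real.sqrt ((μ (Q i)).toReal / (μ R).toReal)) ^ 2 ≤ 1 :=
  (ENNReal.tsum_le_tsum fun _ => ENNReal.ofReal_sqrt_toReal_div_sq_le _ _).trans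
    (tsum_measure_div_le_one μ hQ hdisj hsub)

theorem MeasureTheory.tsum_fiber_ofReal_sqrt_measure_ratio_sq_le_one {β γ : Type*}
    (R : β → Set X) (r : ι → β) (k : ι → γ) (hQ : ∀ i, MeasurableSet (Q i))
    (hsub : ∀ i, Q i ⊆ R (r i))
    (hdisj : ∀ i i', i ≠ i' → r i = r i' → k i = k i' → Disjoint (Q i) (Q i')) (x : β × γ) :
    ∑' i : (fun i => (r i, k i)) ⁻¹' {x},
      ENNReal.ofReal (Real.sqrt ((μ (Q i)).toReal / (μ (R (r i))).toReal)) ^ 2 ≤ 1 := by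
  have hfib (i : (fun i => (r i, k i)) ⁻¹' {x}) : r i = x.1 ∧ k i = x.2 := Prod.ext_iff.mp i.2
  simp only [(hfib _).1]
  refine tsum_ofReal_sqrt_measure_ratio_sq_le_one μ (fun i => hQ i) (fun i i' hne => ?_)
    fun i => (hfib i).1 ▸ hsub i
  exact hdisj i i' (Subtype.coe_ne_coe.mpr hne) ((hfib i).1.trans (hfib i').1.symm)
    ((hfib i).2.trans (hfib i').2.symm)

end

theorem short_range_matrix_bound_general
    {X : Type*} [MeasurableSpace X] (μ : Measure X)
    (κ τ : ℝ) (hκ0 : 0 < κ) (hκ1 : κ < 1) (hτ : 0 < τ)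
    {ιR ιQ : Type*} [Countable ιQ]
    (R₁ : ιR → Set X)
    (Qs : ιQ → Set X) (r : ιQ → ιR) (kk : ιQ → ℕ)
    (hQmeas : ∀ i, MeasurableSet (Qs i)) (hQsub : ∀ i, Qs i ⊆ R₁ (r i))
    (hdisj : ∀ i i', i ≠ i' → r i = r i' → kk i = kk i' → Disjoint (Qs i) (Qs i'))
    (a : ιQ → ℝ) (b : ιR → ℝ) :
    (∑' i : ιQ, ENNReal.ofReal
        (κ ^ ((kk i : ℝ) * τ / 2) *
          Real.sqrt ((μ (Qs i)).toReal / (μ (R₁ (r i))).toReal) * a i * b (r i))) ≤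
      ENNReal.ofReal ((1 - κ ^ (τ / 2))⁻¹) *
        (∑' i, ENNReal.ofReal (a i ^ 2)) ^ ((1 : ℝ) / 2) *
        (∑' j, ENNReal.ofReal (b j ^ 2)) ^ ((1 : ℝ) / 2) := by
  set q : ℝ := κ ^ (τ / 2)
  have hq0 : 0 ≤ q := Real.rpow_nonneg hκ0.le _
  have hq1 : q < 1 := Real.rpow_lt_one hκ0.le hκ1 (by positivity)
  set w : ιQ → ℝ≥0∞ := fun i =>
    ENNReal.ofReal (Real.sqrt ((μ (Qs i)).toReal / (μ (R₁ (r i))).toReal))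
  have hterm (i : ιQ) : ENNReal.ofReal (κ ^ ((kk i : ℝ) * τ / 2) *
      Real.sqrt ((μ (Qs i)).toReal / (μ (R₁ (r i))).toReal) * a i * b (r i)) ≤
      ENNReal.ofReal q ^ kk i * w i * ‖a i‖ₑ * ‖b (r i)‖ₑ := by
    rw [mul_div_assoc, mul_comm (kk i : ℝ), Real.rpow_mul hκ0.le, Real.rpow_natCast,
      ← ENNReal.ofReal_pow hq0]
    exact ENNReal.ofReal_mul_mul_le_mul_enorm (pow_nonneg hq0 _) (Real.sqrt_nonneg _) _ _
  have hsq (x : ℝ) : ‖x‖ₑ ^ 2 = ENNReal.ofReal (x ^ 2) := by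
    rw [← enorm_pow, Real.enorm_of_nonneg (sq_nonneg x)]
  have hconst : (1 - ENNReal.ofReal q)⁻¹ = ENNReal.ofReal ((1 - q)⁻¹) := by
    rw [← ENNReal.ofReal_one, ← ENNReal.ofReal_sub _ hq0,
      ← ENNReal.ofReal_inv_of_pos (sub_pos.mpr hq1)]
  calc _ ≤ ∑' i, ENNReal.ofReal q ^ kk i * w i * ‖a i‖ₑ * ‖b (r i)‖ₑ :=
        ENNReal.tsum_le_tsum hterm
    _ ≤ (1 - ENNReal.ofReal q)⁻¹ * (∑' i, ‖a i‖ₑ ^ 2) ^ ((1 : ℝ) / 2) *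
          (∑' j, ‖b j‖ₑ ^ 2) ^ ((1 : ℝ) / 2) :=
        ENNReal.tsum_pow_mul_mul_mul_le_of_fiber_sq_le_one _ r kk w _ _
          (tsum_fiber_ofReal_sqrt_measure_ratio_sq_le_one μ R₁ r kk hQmeas hQsub hdisj)
    _ = _ := by simp only [hsq, hconst]

/-- The block matrix `T_{Q,R} = κ^{kτ/2}·√(μ(Q)/μ(R₁))`, where for each `R` and each `k ≥ 1`
the cubes `Q ∈ 𝒬(R,k)` are pairwise disjoint subsets of the child `R₁` of `R` (each cube `Q`
belonging to exactly one family, which is encoded by the index maps `r`, `kk`), generates a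
bounded operator on `ℓ²` with norm at most `(1 − κ^{τ/2})⁻¹`. -/
theorem short_range_matrix_bound
    {X : Type*} [MeasurableSpace X] (μ : Measure X)
    (κ τ : ℝ) (hκ0 : 0 < κ) (hκ1 : κ < 1) (hτ : 0 < τ)
    {ιR ιQ : Type*} [Countable ιR] [Countable ιQ]
    (R₁ : ιR → Set X) (hR₁meas : ∀ j, MeasurableSet (R₁ j))
    (hR₁pos : ∀ j, 0 < μ (R₁ j)) (hR₁fin : ∀ j, μ (R₁ j) < ⊤)
    (Qs : ιQ → Set X) (r : ιQ → ιR) (kk : ιQ → ℕ) (hkk : ∀ i, 1 ≤ kk i)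
    (hQmeas : ∀ i, MeasurableSet (Qs i)) (hQsub : ∀ i, Qs i ⊆ R₁ (r i))
    (hdisj : ∀ i i', i ≠ i' → r i = r i' → kk i = kk i' → Disjoint (Qs i) (Qs i'))
    (a : ιQ → ℝ) (b : ιR → ℝ) (ha : ∀ i, 0 ≤ a i) (hb : ∀ j, 0 ≤ b j) :
    (∑' i : ιQ, ENNReal.ofReal
        (κ ^ ((kk i : ℝ) * τ / 2) *
          Real.sqrt ((μ (Qs i)).toReal / (μ (R₁ (r i))).toReal) * a i * b (r i))) ≤
      ENNReal.ofReal ((1 - κ ^ (τ / 2))⁻¹) *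
        (∑' i, ENNReal.ofReal (a i ^ 2)) ^ ((1 : ℝ) / 2) *
        (∑' j, ENNReal.ofReal (b j ^ 2)) ^ ((1 : ℝ) / 2) :=
  short_range_matrix_bound_general μ κ τ hκ0 hκ1 hτ R₁ Qs r kk hQmeas hQsub hdisj a b
end

section
/- Let (X,ρ) be a metric space, μ a finite Borel measure on X, and k a Calderón–Zygmund kernel of order m > 0 with constants C_CZ, τ, δ_CZ that is additionally bounded: |k(x,y)| ≤ M for all x ≠ y. Define F(x) := ∫_X k(t,x) dμ(t). Let Λ ≥ 1 + 1/δ_CZ and K, A > 0. Let Q ⊆ X be a Borel set with D := diam(Q) ∈ (0,∞), μ(Q) > 0, and μ(λ·Q) ≤ K·λ^m·D^m for every λ ≥ 1, where λ·Q := {x ∈ X : dist(x,Q) ≤ (λ−1)·D}. Assume the testing bound ∫_Q |∫_{Λ·Q} k(t,x) dμ(t)|² dμ(x) ≤ A·μ(Λ·Q). Then ∫_Q |F(x) − ⟨F⟩_Q|² dμ(x) ≤ C·μ(Λ·Q), where ⟨F⟩_Q := μ(Q)^{−1}∫_Q F dμ and C depends only on K, Λ, τ, m, C_CZ, A (and not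 on M). -/
open MeasureTheory Metric

/-- The `λ`-dilation of a set `S` in a metric space:
`λ·S = {x : dist(x,S) ≤ (λ−1)·diam S}`. -/
noncomputable def dilate {X : Type*} [MetricSpace X] (S : Set X) (lam : ℝ) : Set X :=
  {z | infDist z S ≤ (lam - 1) * diam S}

open scoped ENNReal

open Set

/-!
Split `F = T*1` as `Fnear + Ffar`, integrating the kernel over `Λ·Q` and over its complement.
The near part is controlled in `L²(Q)` by the testing bound. The far part has oscillation on `Q`
bounded independently of `Q` and `M`: since `Λ ≥ 1 + 1/δ_CZ`, the smoothness of `k` in its second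
variable gives `|k(t,x) − k(t,z)| ≤ C_CZ D^τ dist(t,Q)^{-(m+τ)}` for `x, z ∈ Q` and `t ∉ Λ·Q`, and
summing over dyadic annuli with the growth condition gives
`∫_{(Λ·Q)ᶜ} dist(t,Q)^{-(m+τ)} dμ(t) ≲ D^{-τ}`. Finally, averaging is a contraction on `L^p`, so
`‖F − ⟨F⟩_Q‖₂ ≤ 2‖F − c‖₂` for every constant `c`; take `c = Ffar(x₀)` for some `x₀ ∈ Q`.
-/

section Average

variable {α E : Type*} [MeasurableSpace α] {μ : Measure α} [NormedAddCommGroup E]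

theorem lintegral_ofReal_norm_sq_eq_eLpNorm_sq (f : α → E) :
    ∫⁻ x, ENNReal.ofReal (‖f x‖ ^ 2) ∂μ = eLpNorm f 2 μ ^ 2 := by
  simpa [ENNReal.ofReal_pow, ofReal_norm] using
    (eLpNorm_nnreal_pow_eq_lintegral (μ := μ) (f := f) (p := 2) two_ne_zero).symm

theorem memLp_two_of_lintegral_ofReal_norm_sq_ne_top {f : α → E} (hf : AEStronglyMeasurable f μ)
    (h : ∫⁻ x, ENNReal.ofReal (‖f x‖ ^ 2) ∂μ ≠ ∞) : MemLp f 2 μ := by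
  rw [lintegral_ofReal_norm_sq_eq_eLpNorm_sq, ← lt_top_iff_ne_top] at h
  exact ⟨hf, by simpa using h⟩

variable [NormedSpace ℝ E] [CompleteSpace E] {p : ℝ≥0∞}

theorem eLpNorm_const_average_le (f : α → E) (hp : 1 ≤ p) :
    eLpNorm (fun _ ↦ ⨍ x, f x ∂μ) p μ ≤ eLpNorm f p μ := by
  rw [average_eq, ← eLpNorm_congr_ae (condExp_bot_ae_eq f)]
  exact eLpNorm_condExp_le_eLpNorm f hp

theorem eLpNorm_sub_average_le [IsFiniteMeasure μ] {f : α → E} (hf : Integrable f μ) (c : E)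
    (hp : 1 ≤ p) :
    eLpNorm (fun x ↦ f x - ⨍ y, f y ∂μ) p μ ≤ 2 * eLpNorm (fun x ↦ f x - c) p μ := by
  rcases eq_zero_or_neZero μ with rfl | _
  · simp
  have hfc : Integrable (fun x ↦ f x - c) μ := hf.sub (integrable_const c)
  have hmean : ⨍ y, (f y - c) ∂μ = ⨍ y, f y ∂μ - c := by
    rw [average_eq, integral_sub hf (integrable_const c), smul_sub, ← average_eq, ← average_eq,
      average_const]
  calc eLpNorm (fun x ↦ f x - ⨍ y, f y ∂μ) p μ
      = eLpNorm ((fun x ↦ f x - c) - fun _ ↦ ⨍ y, (f y - c) ∂μ) p μ := by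
        congr 1; ext x; simp only [hmean, Pi.sub_apply]; abel
    _ ≤ eLpNorm (fun x ↦ f x - c) p μ + eLpNorm (fun _ ↦ ⨍ y, (f y - c) ∂μ) p μ :=
        eLpNorm_sub_le hfc.aestronglyMeasurable aestronglyMeasurable_const hp
    _ ≤ 2 * eLpNorm (fun x ↦ f x - c) p μ := by
        rw [two_mul]; gcongr; exact eLpNorm_const_average_le _ hp

theorem lintegral_norm_sub_average_sq_le [IsFiniteMeasure μ] {f g : α → E} {c : E} {B : ℝ}
    (hg : AEStronglyMeasurable g μ) (hf : MemLp f 2 μ) (hgf : ∀ᵐ x ∂μ, ‖g x - c‖ ≤ ‖f x‖ + B) :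
    ∫⁻ x, ENNReal.ofReal (‖g x - ⨍ y, g y ∂μ‖ ^ 2) ∂μ ≤
      8 * (∫⁻ x, ENNReal.ofReal (‖f x‖ ^ 2) ∂μ + ENNReal.ofReal (B ^ 2) * μ univ) := by
  have hgc : Integrable (fun x ↦ g x - c) μ :=
    ((hf.integrable one_le_two).norm.add (integrable_const B)).mono'
      (hg.sub aestronglyMeasurable_const) hgf
  have hgi : Integrable g μ :=
    (hgc.add (integrable_const c)).congr (ae_of_all _ fun x ↦ sub_add_cancel (g x) c)
  have hpt : ∀ᵐ x ∂μ, ENNReal.ofReal (‖g x - c‖ ^ 2) ≤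
      2 * (ENNReal.ofReal (‖f x‖ ^ 2) + ENNReal.ofReal (B ^ 2)) := hgf.mono fun x hx ↦ by
    rw [← ENNReal.ofReal_add (by positivity) (by positivity), ← ENNReal.ofReal_ofNat 2,
      ← ENNReal.ofReal_mul zero_le_two]
    exact ENNReal.ofReal_le_ofReal (by nlinarith [norm_nonneg (g x - c), sq_nonneg (‖f x‖ - B)])
  calc ∫⁻ x, ENNReal.ofReal (‖g x - ⨍ y, g y ∂μ‖ ^ 2) ∂μ
      = eLpNorm (fun x ↦ g x - ⨍ y, g y ∂μ) 2 μ ^ 2 := lintegral_ofReal_norm_sq_eq_eLpNorm_sq _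
    _ ≤ (2 * eLpNorm (fun x ↦ g x - c) 2 μ) ^ 2 := by
        gcongr; exact eLpNorm_sub_average_le hgi c one_le_two
    _ = 4 * ∫⁻ x, ENNReal.ofReal (‖g x - c‖ ^ 2) ∂μ := by
        rw [mul_pow, lintegral_ofReal_norm_sq_eq_eLpNorm_sq]; norm_num
    _ ≤ 4 * ∫⁻ x, 2 * (ENNReal.ofReal (‖f x‖ ^ 2) + ENNReal.ofReal (B ^ 2)) ∂μ := by
        gcongr 4 * ?_; exact lintegral_mono_ae hpt
    _ = 8 * (∫⁻ x, ENNReal.ofReal (‖f x‖ ^ 2) ∂μ + ENNReal.ofReal (B ^ 2) * μ univ) := by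
        rw [lintegral_const_mul' _ _ (by simp), lintegral_add_right _ measurable_const,
          lintegral_const]
        ring

end Average

theorem integrable_of_norm_le_of_ne {α E : Type*} [MeasurableSpace α] [NormedAddCommGroup E]
    {μ : Measure α} [IsFiniteMeasure μ] {f : α → E} (hf : AEStronglyMeasurable f μ) {a : α}
    {M : ℝ} (hM : ∀ t, t ≠ a → ‖f t‖ ≤ M) : Integrable f μ := by
  refine (integrable_const (max M ‖f a‖)).mono' hf (ae_of_all _ fun t ↦ ?_)
  rcases eq_or_ne t a with rfl | ht
  · exact le_max_right _ _
  · exact (hM t ht).trans (le_max_left _ _)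

theorem setLIntegral_rpow_neg_le_of_measure_sublevel_le {α : Type*} [MeasurableSpace α]
    {μ : Measure α} {r : α → ℝ} {K m τ ρ₀ : ℝ} (hK : 0 ≤ K) (hm : 0 ≤ m) (hτ : 0 < τ)
    (hρ₀ : 0 < ρ₀) (growth : ∀ ρ, ρ₀ ≤ ρ → μ {x | r x ≤ ρ} ≤ ENNReal.ofReal (K * ρ ^ m)) :
    ∫⁻ x in {x | ρ₀ < r x}, ENNReal.ofReal (r x ^ (-(m + τ))) ∂μ ≤
      ENNReal.ofReal (2 ^ m * K / (1 - 2 ^ (-τ)) * ρ₀ ^ (-τ)) := by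
  have h2 : (2 : ℝ) ^ (-(m + τ)) * 2 ^ m = 2 ^ (-τ) := by rw [← Real.rpow_add two_pos]; ring_nf
  have hρ : ρ₀ ^ (-(m + τ)) * ρ₀ ^ m = ρ₀ ^ (-τ) := by rw [← Real.rpow_add hρ₀]; ring_nf
  set q : ℝ := 2 ^ (-τ)
  have hq0 : 0 ≤ q := by positivity
  have hq1 : q < 1 := Real.rpow_lt_one_of_one_lt_of_neg one_lt_two (neg_neg_of_pos hτ)
  let S : ℕ → Set α := fun j ↦ {x | 2 ^ j * ρ₀ ≤ r x ∧ r x ≤ 2 ^ (j + 1) * ρ₀}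
  have hcover : {x | ρ₀ < r x} ⊆ ⋃ j, S j := by
    intro x hx
    obtain ⟨j, hj, hj'⟩ := exists_nat_pow_near ((one_le_div hρ₀).2 (le_of_lt hx)) one_lt_two
    exact mem_iUnion.2 ⟨j, (le_div_iff₀ hρ₀).1 hj, ((div_lt_iff₀ hρ₀).1 hj').le⟩
  have hshell (j : ℕ) : ∫⁻ x in S j, ENNReal.ofReal (r x ^ (-(m + τ))) ∂μ ≤
      ENNReal.ofReal (2 ^ m * K * ρ₀ ^ (-τ) * q ^ j) := by
    have h2j : (0 : ℝ) < 2 ^ j * ρ₀ := by positivity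
    calc ∫⁻ x in S j, ENNReal.ofReal (r x ^ (-(m + τ))) ∂μ
        ≤ ∫⁻ x in S j, ENNReal.ofReal ((2 ^ j * ρ₀) ^ (-(m + τ))) ∂μ :=
          setLIntegral_mono measurable_const fun x hx ↦ ENNReal.ofReal_le_ofReal <|
            Real.rpow_le_rpow_of_nonpos h2j hx.1 (by linarith)
      _ = ENNReal.ofReal ((2 ^ j * ρ₀) ^ (-(m + τ))) * μ (S j) := setLIntegral_const _ _
      _ ≤ ENNReal.ofReal ((2 ^ j * ρ₀) ^ (-(m + τ))) *
            ENNReal.ofReal (K * (2 ^ (j + 1) * ρ₀) ^ m) := by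
          gcongr
          refine (measure_mono fun x hx ↦ hx.2).trans (growth _ ?_)
          nlinarith [one_le_pow₀ (M₀ := ℝ) one_le_two (n := j + 1)]
      _ = ENNReal.ofReal (2 ^ m * K * ρ₀ ^ (-τ) * q ^ j) := by
          rw [← ENNReal.ofReal_mul (by positivity)]
          congr 1
          rw [Real.mul_rpow (by positivity) hρ₀.le, Real.mul_rpow (by positivity) hρ₀.le,
            ← Real.rpow_pow_comm zero_le_two, ← Real.rpow_pow_comm zero_le_two, pow_succ, ← h2,
            ← hρ, mul_pow]
          ring
  calc ∫⁻ x in {x | ρ₀ < r x}, ENNReal.ofReal (r x ^ (-(m + τ))) ∂μ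
      ≤ ∫⁻ x in ⋃ j, S j, ENNReal.ofReal (r x ^ (-(m + τ))) ∂μ := lintegral_mono_set hcover
    _ ≤ ∑' j, ∫⁻ x in S j, ENNReal.ofReal (r x ^ (-(m + τ))) ∂μ := lintegral_iUnion_le _ _
    _ ≤ ∑' j, ENNReal.ofReal (2 ^ m * K * ρ₀ ^ (-τ) * q ^ j) := ENNReal.tsum_le_tsum hshell
    _ = ENNReal.ofReal (∑' j, 2 ^ m * K * ρ₀ ^ (-τ) * q ^ j) := (ENNReal.ofReal_tsum_of_nonneg
          (fun j ↦ by positivity) ((summable_geometric_of_lt_one hq0 hq1).mul_left _)).symm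
    _ = ENNReal.ofReal (2 ^ m * K / (1 - q) * ρ₀ ^ (-τ)) := by
          rw [tsum_mul_left, tsum_geometric_of_lt_one hq0 hq1, div_eq_mul_inv]
          ring_nf

section Kernel

variable {X E : Type*} [MetricSpace X] [NormedAddCommGroup E]

theorem subset_dilate (S : Set X) {lam : ℝ} (hlam : 1 ≤ lam) : S ⊆ dilate S lam := fun z hz ↦ by
  rw [dilate, mem_ofPred_eq, infDist_zero_of_mem hz]
  exact mul_nonneg (sub_nonneg.2 hlam) diam_nonneg

theorem isClosed_dilate (S : Set X) (lam : ℝ) : IsClosed (dilate S lam) :=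
  isClosed_le (continuous_infDist_pt S) continuous_const

theorem setOf_infDist_le_eq_dilate {S : Set X} (hS : diam S ≠ 0) (ρ : ℝ) :
    {x | infDist x S ≤ ρ} = dilate S (1 + ρ / diam S) := by
  simp only [dilate, add_sub_cancel_left, div_mul_cancel₀ ρ hS]

theorem compl_dilate (S : Set X) (lam : ℝ) :
    (dilate S lam)ᶜ = {x | (lam - 1) * diam S < infDist x S} := by
  simp only [dilate, compl_ofPred, not_le]

noncomputable def tailConst (m τ K Λ : ℝ) : ℝ :=
  2 ^ m * (K * (Λ / (Λ - 1)) ^ m) / (1 - 2 ^ (-τ)) * (Λ - 1) ^ (-τ)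

theorem setLIntegral_compl_dilate_infDist_rpow_neg_le [MeasurableSpace X] {μ : Measure X}
    {Q : Set X} {K m τ Λ : ℝ} (hK : 0 ≤ K) (hm : 0 ≤ m) (hτ : 0 < τ) (hΛ : 1 < Λ)
    (hD : 0 < diam Q)
    (growth : ∀ lam, 1 ≤ lam → μ (dilate Q lam) ≤ ENNReal.ofReal (K * lam ^ m * diam Q ^ m)) :
    ∫⁻ t in (dilate Q Λ)ᶜ, ENNReal.ofReal (infDist t Q ^ (-(m + τ))) ∂μ ≤
      ENNReal.ofReal (tailConst m τ K Λ * diam Q ^ (-τ)) := by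
  have hΛ1 : 0 < Λ - 1 := sub_pos.2 hΛ
  have hgrowth (ρ : ℝ) (hρ : (Λ - 1) * diam Q ≤ ρ) :
      μ {x | infDist x Q ≤ ρ} ≤ ENNReal.ofReal (K * (Λ / (Λ - 1)) ^ m * ρ ^ m) := by
    have hρ0 : 0 ≤ ρ := le_trans (by positivity) hρ
    rw [setOf_infDist_le_eq_dilate hD.ne']
    refine (growth _ (le_add_of_nonneg_right (by positivity))).trans
      (ENNReal.ofReal_le_ofReal ?_)
    rw [mul_assoc, mul_assoc, ← Real.mul_rpow (by positivity) hD.le,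
      ← Real.mul_rpow (by positivity) hρ0]
    refine mul_le_mul_of_nonneg_left (Real.rpow_le_rpow (by positivity) ?_ hm) hK
    rw [add_mul, div_mul_cancel₀ ρ hD.ne', one_mul, div_mul_eq_mul_div, le_div_iff₀ hΛ1]
    nlinarith
  rw [compl_dilate]
  refine (setLIntegral_rpow_neg_le_of_measure_sublevel_le (by positivity) hm hτ (by positivity)
    hgrowth).trans_eq ?_
  rw [tailConst, Real.mul_rpow hΛ1.le hD.le]
  ring_nf

theorem norm_sub_le_of_notMem_dilate {k : X → X → E} {Q : Set X} {C δ m τ Λ : ℝ}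
    (hδ : 0 < δ) (hΛ : 1 + 1 / δ ≤ Λ) (hC : 0 ≤ C) (hm : 0 ≤ m) (hτ : 0 < τ)
    (hQ : Bornology.IsBounded Q)
    (hk : ∀ t x z, t ≠ x → t ≠ z → dist x z ≤ δ * dist t x →
      ‖k t x - k t z‖ ≤ C * dist x z ^ τ / dist t x ^ (m + τ))
    {t x z : X} (ht : t ∉ dilate Q Λ) (hx : x ∈ Q) (hz : z ∈ Q) :
    ‖k t x - k t z‖ ≤ C * diam Q ^ τ * infDist t Q ^ (-(m + τ)) := by
  have hfar : (Λ - 1) * diam Q < infDist t Q := not_le.1 ht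
  have hΛ1 : 0 < Λ - 1 := by have := one_div_pos.2 hδ; linarith
  have hδΛ : 1 ≤ δ * (Λ - 1) := (div_le_iff₀' hδ).1 (by linarith)
  have hpos : 0 < infDist t Q := (mul_nonneg hΛ1.le diam_nonneg).trans_lt hfar
  have htx : infDist t Q ≤ dist t x := infDist_le_dist_of_mem hx
  have htz : infDist t Q ≤ dist t z := infDist_le_dist_of_mem hz
  have hxz : dist x z ≤ diam Q := dist_le_diam_of_mem hQ hx hz
  have hclose : dist x z ≤ δ * dist t x := calc
    dist x z ≤ δ * (Λ - 1) * diam Q := hxz.trans (le_mul_of_one_le_left diam_nonneg hδΛ)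
    _ ≤ δ * dist t x := by rw [mul_assoc]; gcongr; exact hfar.le.trans htx
  calc ‖k t x - k t z‖ ≤ C * dist x z ^ τ / dist t x ^ (m + τ) :=
        hk t x z (dist_pos.1 (hpos.trans_le htx)) (dist_pos.1 (hpos.trans_le htz)) hclose
    _ ≤ C * diam Q ^ τ / infDist t Q ^ (m + τ) := by gcongr
    _ = C * diam Q ^ τ * infDist t Q ^ (-(m + τ)) := by
        rw [Real.rpow_neg hpos.le, div_eq_mul_inv]

theorem norm_setIntegral_compl_dilate_sub_le [MeasurableSpace X] [OpensMeasurableSpace X]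
    [NormedSpace ℝ E] {μ : Measure X} {k : X → X → E} {Q : Set X} {C δ K m τ Λ : ℝ}
    (hδ : 0 < δ) (hΛ : 1 + 1 / δ ≤ Λ) (hC : 0 ≤ C) (hK : 0 ≤ K) (hm : 0 ≤ m) (hτ : 0 < τ)
    (hQ : Bornology.IsBounded Q) (hD : 0 < diam Q)
    (growth : ∀ lam, 1 ≤ lam → μ (dilate Q lam) ≤ ENNReal.ofReal (K * lam ^ m * diam Q ^ m))
    (hk : ∀ t x z, t ≠ x → t ≠ z → dist x z ≤ δ * dist t x →
      ‖k t x - k t z‖ ≤ C * dist x z ^ τ / dist t x ^ (m + τ))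
    {x z : X} (hx : x ∈ Q) (hz : z ∈ Q) (hxi : IntegrableOn (fun t ↦ k t x) (dilate Q Λ)ᶜ μ)
    (hzi : IntegrableOn (fun t ↦ k t z) (dilate Q Λ)ᶜ μ) :
    ‖∫ t in (dilate Q Λ)ᶜ, k t x ∂μ - ∫ t in (dilate Q Λ)ᶜ, k t z ∂μ‖ ≤
      C * tailConst m τ K Λ := by
  have hΛ1 : 1 < Λ := by have := one_div_pos.2 hδ; linarith
  have hq : 0 < 1 - (2 : ℝ) ^ (-τ) :=
    sub_pos.2 (Real.rpow_lt_one_of_one_lt_of_neg one_lt_two (neg_neg_of_pos hτ))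
  have htail : 0 ≤ tailConst m τ K Λ := by
    have := sub_pos.2 hΛ1
    unfold tailConst; positivity
  rw [← integral_sub hxi hzi, ← ENNReal.ofReal_le_ofReal_iff (by positivity), ofReal_norm]
  calc ‖∫ t in (dilate Q Λ)ᶜ, (k t x - k t z) ∂μ‖ₑ
      ≤ ∫⁻ t in (dilate Q Λ)ᶜ, ‖k t x - k t z‖ₑ ∂μ := enorm_integral_le_lintegral_enorm _
    _ ≤ ∫⁻ t in (dilate Q Λ)ᶜ, ENNReal.ofReal (C * diam Q ^ τ) *
          ENNReal.ofReal (infDist t Q ^ (-(m + τ))) ∂μ := by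
        refine setLIntegral_mono (by fun_prop) fun t ht ↦ ?_
        rw [← ENNReal.ofReal_mul (by positivity), ← ofReal_norm]
        exact ENNReal.ofReal_le_ofReal
          (norm_sub_le_of_notMem_dilate hδ hΛ hC hm hτ hQ hk ht hx hz)
    _ = ENNReal.ofReal (C * diam Q ^ τ) *
          ∫⁻ t in (dilate Q Λ)ᶜ, ENNReal.ofReal (infDist t Q ^ (-(m + τ))) ∂μ :=
        lintegral_const_mul' _ _ ENNReal.ofReal_ne_top
    _ ≤ ENNReal.ofReal (C * diam Q ^ τ) * ENNReal.ofReal (tailConst m τ K Λ * diam Q ^ (-τ)) := by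
        gcongr
        exact setLIntegral_compl_dilate_infDist_rpow_neg_le hK hm hτ hΛ1 hD growth
    _ = ENNReal.ofReal (C * tailConst m τ K Λ) := by
        rw [← ENNReal.ofReal_mul (by positivity), Real.rpow_neg hD.le]
        congr 1
        field_simp

end Kernel

/-- `T*1` is a pseudo-BMO function: for a bounded Calderón–Zygmund kernel `k` of order `m`,
a finite measure `μ`, a set `Q` of positive finite diameter `D` with `μ(λ·Q) ≤ K λ^m D^m`
for all `λ ≥ 1`, `Λ ≥ 1 + 1/δ_CZ`, and the testing bound
`∫_Q |∫_{ΛQ} k(t,x) dμ(t)|² dμ(x) ≤ A·μ(ΛQ)`, the function `F(x) = ∫ k(t,x) dμ(t)` satisfies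
`∫_Q |F − ⟨F⟩_Q|² dμ ≤ C·μ(ΛQ)` with `C` depending only on `K, Λ, τ, m, C_CZ, A` (not on the
bound `M` of the kernel). -/
theorem Tstar_one_pseudoBMO (m τ C_CZ K Λ A : ℝ)
    (hm : 0 < m) (hτ : 0 < τ) (hCCZ : 0 < C_CZ) (hK : 0 < K) (hA : 0 < A) :
    ∃ C : ℝ, 0 < C ∧
      ∀ (X : Type) [MetricSpace X] [MeasurableSpace X] [BorelSpace X]
        (μ : Measure X) [IsFiniteMeasure μ] (δ_CZ M : ℝ) (k : X → X → ℂ) (Q : Set X),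
        0 < δ_CZ → δ_CZ < 1 →
        Measurable (Function.uncurry k) →
        (∀ x y : X, x ≠ y → ‖k x y‖ ≤ C_CZ / dist x y ^ m) →
        (∀ x y y' : X, x ≠ y → x ≠ y' → dist y y' ≤ δ_CZ * dist x y →
          ‖k x y - k x y'‖ + ‖k y x - k y' x‖ ≤ C_CZ * dist y y' ^ τ / dist x y ^ (m + τ)) →
        (∀ x y : X, x ≠ y → ‖k x y‖ ≤ M) →
        MeasurableSet Q → Bornology.IsBounded Q → 0 < diam Q → 0 < μ Q →
        (∀ lam : ℝ, 1 ≤ lam →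
          μ (dilate Q lam) ≤ ENNReal.ofReal (K * lam ^ m * diam Q ^ m)) →
        1 + 1 / δ_CZ ≤ Λ →
        (∫⁻ x in Q, ENNReal.ofReal (‖∫ t in dilate Q Λ, k t x ∂μ‖ ^ 2) ∂μ ≤
          ENNReal.ofReal A * μ (dilate Q Λ)) →
        ∫⁻ x in Q, ENNReal.ofReal
            (‖(∫ t, k t x ∂μ) - (μ Q).toReal⁻¹ • ∫ z in Q, (∫ t, k t z ∂μ) ∂μ‖ ^ 2) ∂μ ≤
          ENNReal.ofReal C * μ (dilate Q Λ) := by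
  set B := C_CZ * tailConst m τ K Λ
  refine ⟨8 * (A + B ^ 2), by positivity, ?_⟩
  intro X _ _ _ μ _ δ M k Q hδ _ hk _ hk_smooth hkM hQ hQb hD hμQ growth hΛ htest
  have hΛ1 : 1 ≤ Λ := by have := one_div_pos.2 hδ; linarith
  have hmeas (ν : Measure X) [SFinite ν] : StronglyMeasurable fun x ↦ ∫ t, k t x ∂ν :=
    (hk.comp measurable_swap).stronglyMeasurable.integral_prod_right'
  have hint (x : X) : Integrable (fun t ↦ k t x) μ := integrable_of_norm_le_of_ne
    (hk.comp (measurable_id.prodMk measurable_const)).aestronglyMeasurable (hkM · x)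
  set Fnear := fun x ↦ ∫ t in dilate Q Λ, k t x ∂μ
  set Ffar := fun x ↦ ∫ t in (dilate Q Λ)ᶜ, k t x ∂μ
  have hnear : MemLp Fnear 2 (μ.restrict Q) :=
    memLp_two_of_lintegral_ofReal_norm_sq_ne_top (hmeas _).aestronglyMeasurable
      (htest.trans_lt (ENNReal.mul_lt_top ENNReal.ofReal_lt_top (measure_lt_top μ _))).ne
  have hfar : ∀ x ∈ Q, ∀ z ∈ Q, ‖Ffar x - Ffar z‖ ≤ B := fun x hx z hz ↦
    norm_setIntegral_compl_dilate_sub_le hδ hΛ hCCZ.le hK.le hm.le hτ hQb hD growth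
      (fun t x z htx htz h ↦ (le_add_of_nonneg_right (norm_nonneg _)).trans
        (hk_smooth t x z htx htz h)) hx hz (hint x).integrableOn (hint z).integrableOn
  obtain ⟨x₀, hx₀⟩ := nonempty_of_measure_ne_zero hμQ.ne'
  have hsplit : ∀ᵐ x ∂μ.restrict Q, ‖∫ t, k t x ∂μ - Ffar x₀‖ ≤ ‖Fnear x‖ + B := by
    refine ae_restrict_of_forall_mem hQ fun x hx ↦ ?_
    rw [← integral_add_compl (isClosed_dilate Q Λ).measurableSet (hint x), add_sub_assoc]
    exact (norm_add_le _ _).trans (add_le_add le_rfl (hfar x hx x₀ hx₀))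
  rw [← measureReal_def, ← setAverage_eq]
  calc _ ≤ 8 * (∫⁻ x in Q, ENNReal.ofReal (‖Fnear x‖ ^ 2) ∂μ + ENNReal.ofReal (B ^ 2) * μ Q) := by
        simpa using lintegral_norm_sub_average_sq_le (hmeas μ).aestronglyMeasurable.restrict
          hnear hsplit
    _ ≤ 8 * (ENNReal.ofReal A * μ (dilate Q Λ) + ENNReal.ofReal (B ^ 2) * μ (dilate Q Λ)) := by
        gcongr; exact subset_dilate Q hΛ1
    _ = ENNReal.ofReal (8 * (A + B ^ 2)) * μ (dilate Q Λ) := by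
        rw [ENNReal.ofReal_mul (by norm_num), ENNReal.ofReal_add hA.le (by positivity),
          ENNReal.ofReal_ofNat]
        ring
end
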